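/- Let T : Fin 2 → Fin 2 → Fin 2 → ℂ be antisymmetric in its first two arguments, i.e. T i j l = −(T j i l) for all i, j, l, let A : Fin 2 → Fin 2 → ℂ, and let β : Fin 2 → ℂ. Then −∑_{i,l} |A i l|² + 2·Re(∑_{i,j,l} conj(T i j l) · (A i l) · (β j)) − (1/2)·(∑_{i,j,l} |T i j l|²)·(∑_j |β j|²) ≤ 0. (This is the pointwise algebraic inequality, special to complex dimension two, showing that for a (0,1)-form β one has −|∇β|² + 2 Re⟨β, T ∘ ∂β⟩ − ⟨Q, β ⊗ β̄⟩ ≤ 0 in a unitary frame, where Q = ½|T|² g.) -/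

import Mathlib

open scoped BigOperators ComplexConjugate

/-!
Complete the square. With `S i l = ∑ⱼ T i j l · conj (β j)` the left-hand side equals
`|S|² − |A − S|² − ½|T|²|β|²`. In dimension two antisymmetry forces `T i i l = 0`, so
`S 0 l = T 0 1 l · conj (β 1)` and `S 1 l = −T 0 1 l · conj (β 0)`; hence
`|S|² = ∑ₗ |T 0 1 l|² |β|² = ½|T|²|β|²` and the left-hand side is `−|A − S|² ≤ 0`.
-/

lemma Complex.neg_sq_norm_add_two_re_conj_mul (a s : ℂ) :
    -‖a‖ ^ 2 + 2 * (conj s * a).re = ‖s‖ ^ 2 - ‖a - s‖ ^ 2 := by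
  rw [mul_comm (conj s), Complex.sq_norm, Complex.sq_norm, Complex.sq_norm, Complex.normSq_sub]
  ring

lemma neg_sum_sq_norm_add_two_re_sum_conj_mul {ι κ : Type*} [Fintype ι] [Fintype κ]
    (A S : ι → κ → ℂ) :
    -(∑ i, ∑ l, ‖A i l‖ ^ 2) + 2 * (∑ i, ∑ l, conj (S i l) * A i l).re
      = ∑ i, ∑ l, ‖S i l‖ ^ 2 - ∑ i, ∑ l, ‖A i l - S i l‖ ^ 2 := by
  simp only [Complex.re_sum, Finset.mul_sum, ← Finset.sum_neg_distrib, ← Finset.sum_add_distrib,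
    ← Finset.sum_sub_distrib, Complex.neg_sq_norm_add_two_re_conj_mul]

def torsionContract {ι : Type*} [Fintype ι] (T : ι → ι → ι → ℂ) (β : ι → ℂ) (i l : ι) : ℂ :=
  ∑ j, T i j l * conj (β j)

lemma sum_conj_mul_mul_eq_sum_conj_torsionContract_mul {ι : Type*} [Fintype ι]
    (T : ι → ι → ι → ℂ) (A : ι → ι → ℂ) (β : ι → ℂ) :
    ∑ i, ∑ j, ∑ l, conj (T i j l) * A i l * β j
      = ∑ i, ∑ l, conj (torsionContract T β i l) * A i l := by
  simp only [torsionContract, map_sum, map_mul, Complex.conj_conj, Finset.sum_mul]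
  refine Finset.sum_congr rfl fun i _ => Finset.sum_comm.trans ?_
  exact Finset.sum_congr rfl fun l _ => Finset.sum_congr rfl fun j _ => by ring

lemma sum_sq_norm_torsionContract_of_antisymm (T : Fin 2 → Fin 2 → Fin 2 → ℂ)
    (hT : ∀ i j l, T i j l = -(T j i l)) (β : Fin 2 → ℂ) :
    ∑ i, ∑ l, ‖torsionContract T β i l‖ ^ 2
      = (1 / 2) * (∑ i, ∑ j, ∑ l, ‖T i j l‖ ^ 2) * ∑ j, ‖β j‖ ^ 2 := by
  have hdiag : ∀ i l, T i i l = 0 := fun i l => by linear_combination (1 / 2 : ℂ) * hT i i l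
  simp only [torsionContract, Fin.sum_univ_two, hdiag, hT 1 0, zero_mul, zero_add, add_zero,
    norm_mul, norm_neg, norm_zero, Complex.norm_conj]
  ring

/-- The pointwise algebraic inequality, special to complex dimension two: for a torsion
array `T` antisymmetric in its first two indices, an array `A` (playing the role of `∇β`)
and a vector `β`, one has `−|A|² + 2 Re⟨conj T · A · β⟩ − ½|T|²|β|² ≤ 0`. -/
theorem dimension_two_torsion_inequality
    (T : Fin 2 → Fin 2 → Fin 2 → ℂ)
    (hT : ∀ i j l, T i j l = -(T j i l))
    (A : Fin 2 → Fin 2 → ℂ) (β : Fin 2 → ℂ) :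
    -(∑ i, ∑ l, ‖A i l‖ ^ 2)
      + 2 * (∑ i, ∑ j, ∑ l, (starRingEnd ℂ) (T i j l) * A i l * β j).re
      - (1 / 2) * (∑ i, ∑ j, ∑ l, ‖T i j l‖ ^ 2) * (∑ j, ‖β j‖ ^ 2)
      ≤ 0 := by
  rw [sum_conj_mul_mul_eq_sum_conj_torsionContract_mul, neg_sum_sq_norm_add_two_re_sum_conj_mul,
    sum_sq_norm_torsionContract_of_antisymm T hT β]
  have : 0 ≤ ∑ i, ∑ l, ‖A i l - torsionContract T β i l‖ ^ 2 := by positivity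
  linarith
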